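/- arXiv:math/0511031 — 5 statements merged into one kernel-verified Lean document; each statement's English description precedes it below -/
import Mathlib

section
/- Let V be a finite-dimensional real vector space, B a symmetric bilinear form on V, and ρ : V → V an isometry of B with ρ ∘ ρ = -id. Suppose x, y ∈ V are ℝ-linearly independent with B(x,x) = B(y,y) = B(x,y) = 0, and let Λ = span_ℂ{x, y} ⊆ V_ℂ. If Λ ∩ W ≠ {0}, then Λ is ρ_ℂ-invariant, Λ ∩ W is a one-dimensional complex subspace, and there exists z ∈ span_ℝ{x, y}, z ≠ 0, such that Λ = span_ℂ{z, ρ(z)} and Λ ∩ W = ℂ·(z - i·ρ(z)). -/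
open TensorProduct

noncomputable def reL (V : Type*) [AddCommGroup V] [Module ℝ V] : ℂ ⊗[ℝ] V →ₗ[ℝ] V :=
  TensorProduct.lift ((LinearMap.lsmul ℝ V).comp Complex.reLm)

noncomputable def imL (V : Type*) [AddCommGroup V] [Module ℝ V] : ℂ ⊗[ℝ] V →ₗ[ℝ] V :=
  TensorProduct.lift ((LinearMap.lsmul ℝ V).comp Complex.imLm)

@[simp] lemma reL_tmul {V : Type*} [AddCommGroup V] [Module ℝ V] (c : ℂ) (v : V) :
    reL V (c ⊗ₜ[ℝ] v) = c.re • v := rfl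

@[simp] lemma imL_tmul {V : Type*} [AddCommGroup V] [Module ℝ V] (c : ℂ) (v : V) :
    imL V (c ⊗ₜ[ℝ] v) = c.im • v := rfl

lemma decompC {V : Type*} [AddCommGroup V] [Module ℝ V] (a : ℂ) (t : V) :
    a • ((1:ℂ) ⊗ₜ[ℝ] t) = (1:ℂ) ⊗ₜ[ℝ] (a.re • t) + Complex.I ⊗ₜ[ℝ] (a.im • t) := by
  rw [smul_tmul', smul_eq_mul, mul_one]
  nth_rewrite 1 [show a = (a.re • (1:ℂ)) + (a.im • Complex.I) by
    apply Complex.ext <;> simp]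
  rw [TensorProduct.add_tmul, smul_tmul, smul_tmul]

lemma indepC {V : Type*} [AddCommGroup V] [Module ℝ V] {z w : V}
    (h : ∀ s t : ℝ, s • z + t • w = 0 → s = 0 ∧ t = 0) (α β : ℂ)
    (heq : α • ((1:ℂ) ⊗ₜ[ℝ] z) + β • ((1:ℂ) ⊗ₜ[ℝ] w) = 0) : α = 0 ∧ β = 0 := by
  rw [decompC, decompC] at heq
  have h1 : α.re • z + β.re • w = 0 := by
    have := congrArg (reL V) heq
    simpa [smul_smul] using this
  have h2 : α.im • z + β.im • w = 0 := by
    have := congrArg (imL V) heq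
    simpa [smul_smul] using this
  obtain ⟨hr1, hr2⟩ := h _ _ h1
  obtain ⟨hi1, hi2⟩ := h _ _ h2
  exact ⟨Complex.ext hr1 hi1, Complex.ext hr2 hi2⟩

lemma mem_spanC {V : Type*} [AddCommGroup V] [Module ℝ V] (S : Set V) (t : V)
    (ht : t ∈ Submodule.span ℝ S) :
    (1:ℂ) ⊗ₜ[ℝ] t ∈ Submodule.span ℂ ((fun v => (1:ℂ) ⊗ₜ[ℝ] v) '' S) := by
  let j : V →ₗ[ℝ] ℂ ⊗[ℝ] V := TensorProduct.mk ℝ ℂ V 1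
  have h : Submodule.span ℝ S ≤
      ((Submodule.span ℂ ((fun v => (1:ℂ) ⊗ₜ[ℝ] v) '' S)).restrictScalars ℝ).comap j := by
    apply Submodule.span_le.2
    intro s hs
    exact Submodule.subset_span ⟨s, hs, rfl⟩
  exact h ht

set_option maxHeartbeats 1000000 in
/-- Let `V` be a finite-dimensional real vector space, `B` a symmetric bilinear
form, `ρ : V → V` an isometry of `B` with `ρ ∘ ρ = -id`. Suppose `x, y ∈ V` are `ℝ`-linearly
independent with `B(x,x) = B(y,y) = B(x,y) = 0` and let `Λ = span_ℂ{x, y}` in the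
complexification. If `Λ ∩ W ≠ {0}` (where `W` is the `i`-eigenspace of `ρ_ℂ`), then `Λ` is
`ρ_ℂ`-invariant, `Λ ∩ W` is one-dimensional over `ℂ`, and there is a nonzero
`z ∈ span_ℝ{x, y}` with `Λ = span_ℂ{z, ρ(z)}` and `Λ ∩ W = ℂ·(z - i·ρ(z))`. -/
theorem stmt5 (V : Type*) [AddCommGroup V] [Module ℝ V] [FiniteDimensional ℝ V]
    (B : LinearMap.BilinForm ℝ V) (hsymm : ∀ x y : V, B x y = B y x)
    (ρ : V →ₗ[ℝ] V) (hiso : ∀ x y : V, B (ρ x) (ρ y) = B x y)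
    (hρ : ρ ∘ₗ ρ = -LinearMap.id)
    (x y : V) (hindep : LinearIndependent ℝ ![x, y])
    (hxx : B x x = 0) (hyy : B y y = 0) (hxy : B x y = 0)
    (W : Submodule ℂ (ℂ ⊗[ℝ] V))
    (hW : W = Module.End.eigenspace (LinearMap.baseChange ℂ ρ) Complex.I)
    (Λ : Submodule ℂ (ℂ ⊗[ℝ] V))
    (hΛ : Λ = Submodule.span ℂ {(1 : ℂ) ⊗ₜ[ℝ] x, (1 : ℂ) ⊗ₜ[ℝ] y})
    (hne : Λ ⊓ W ≠ ⊥) :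
    (∀ v ∈ Λ, LinearMap.baseChange ℂ ρ v ∈ Λ) ∧
    Module.finrank ℂ ↥(Λ ⊓ W) = 1 ∧
    ∃ z ∈ Submodule.span ℝ ({x, y} : Set V), z ≠ 0 ∧
      Λ = Submodule.span ℂ {(1 : ℂ) ⊗ₜ[ℝ] z, (1 : ℂ) ⊗ₜ[ℝ] (ρ z)} ∧
      Λ ⊓ W = Submodule.span ℂ
        {(1 : ℂ) ⊗ₜ[ℝ] z - Complex.I • ((1 : ℂ) ⊗ₜ[ℝ] (ρ z))} := by
  have hρ2 : ∀ t : V, ρ (ρ t) = -t := by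
    intro t
    have := LinearMap.ext_iff.mp hρ t
    simpa using this
  have hpair_xy : ∀ s t : ℝ, s • x + t • y = 0 → s = 0 ∧ t = 0 :=
    LinearIndependent.pair_iff.mp hindep
  -- obtain a nonzero element of Λ ⊓ W and decompose it
  obtain ⟨w, hwmem, hw0⟩ := (Submodule.ne_bot_iff _).mp hne
  obtain ⟨hwΛ, hwW⟩ := hwmem
  rw [hΛ] at hwΛ
  obtain ⟨a, b, hab⟩ := Submodule.mem_span_pair.mp hwΛ
  set u : V := a.re • x + b.re • y with hu
  set v : V := a.im • x + b.im • y with hv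
  have hwuv : w = (1:ℂ) ⊗ₜ[ℝ] u + Complex.I ⊗ₜ[ℝ] v := by
    rw [← hab, decompC, decompC, hu, hv]
    simp only [TensorProduct.tmul_add]
    abel
  rw [hW] at hwW
  have hwWe : LinearMap.baseChange ℂ ρ w = Complex.I • w := Module.End.mem_eigenspace_iff.mp hwW
  rw [hwuv] at hwWe
  have hwW' : (1:ℂ) ⊗ₜ[ℝ] (ρ u) + Complex.I ⊗ₜ[ℝ] (ρ v)
      = (-1:ℂ) ⊗ₜ[ℝ] v + Complex.I ⊗ₜ[ℝ] u := by
    rw [map_add, LinearMap.baseChange_tmul, LinearMap.baseChange_tmul] at hwWe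
    rw [hwWe, smul_add, TensorProduct.smul_tmul', TensorProduct.smul_tmul',
      smul_eq_mul, smul_eq_mul, mul_one, Complex.I_mul_I]
    abel
  have hru : ρ u = -v := by
    have h1 := congrArg (reL V) hwW'
    simpa using h1
  have hrv : ρ v = u := by
    have h1 := congrArg (imL V) hwW'
    simpa using h1
  have hune : u ≠ 0 := by
    intro h
    apply hw0
    have hv0 : v = 0 := by
      have := hrv
      rw [h] at this
      have h2 := congrArg ρ this
      rw [hρ2, map_zero] at h2
      simpa using h2.symm
    rw [hwuv, h, hv0]
    simp
  -- linear independence of u and ρ u over ℝ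
  have hpair_z : ∀ s t : ℝ, s • u + t • ρ u = 0 → s = 0 ∧ t = 0 := by
    intro s t hst
    have h2 : s • ρ u + t • (-u) = 0 := by
      have := congrArg ρ hst
      rw [map_add, map_smul, map_smul, hρ2, map_zero] at this
      exact this
    have key : (s * s + t * t) • u = 0 := by
      linear_combination (norm := module) s • hst - t • h2
    rcases smul_eq_zero.mp key with h | h
    · obtain ⟨h1, h2'⟩ := (add_eq_zero_iff_of_nonneg (mul_self_nonneg s) (mul_self_nonneg t)).mp h
      exact ⟨mul_self_eq_zero.mp h1, mul_self_eq_zero.mp h2'⟩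
    · exact absurd h hune
  have hu_mem : u ∈ Submodule.span ℝ ({x, y} : Set V) :=
    Submodule.mem_span_pair.mpr ⟨a.re, b.re, rfl⟩
  have hv_mem : v ∈ Submodule.span ℝ ({x, y} : Set V) :=
    Submodule.mem_span_pair.mpr ⟨a.im, b.im, rfl⟩
  have hρu_mem : ρ u ∈ Submodule.span ℝ ({x, y} : Set V) := by
    rw [hru]; exact neg_mem hv_mem
  -- span ℝ {u, ρ u} = span ℝ {x, y}
  have hPle : Submodule.span ℝ ({u, ρ u} : Set V) ≤ Submodule.span ℝ ({x, y} : Set V) := by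
    apply Submodule.span_le.2
    rintro t (rfl | rfl)
    · exact hu_mem
    · exact hρu_mem
  have hrange : ∀ p q : V, Set.range ![p, q] = {p, q} := by
    intro p q
    ext t
    simp [Fin.exists_fin_two, or_comm]
  have f1 : Module.finrank ℝ ↥(Submodule.span ℝ ({x, y} : Set V)) = 2 := by
    rw [← hrange x y, finrank_span_eq_card hindep]
    simp
  have f2 : Module.finrank ℝ ↥(Submodule.span ℝ ({u, ρ u} : Set V)) = 2 := by
    rw [← hrange u (ρ u), finrank_span_eq_card (LinearIndependent.pair_iff.mpr hpair_z)]
    simp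
  have hP : Submodule.span ℝ ({u, ρ u} : Set V) = Submodule.span ℝ ({x, y} : Set V) :=
    Submodule.eq_of_le_of_finrank_le hPle (by rw [f1, f2])
  -- Λ = span ℂ {1 ⊗ u, 1 ⊗ ρ u}
  have hΛ' : Λ = Submodule.span ℂ {(1:ℂ) ⊗ₜ[ℝ] u, (1:ℂ) ⊗ₜ[ℝ] (ρ u)} := by
    apply le_antisymm
    · rw [hΛ]
      apply Submodule.span_le.2
      rintro t (rfl | rfl)
      · have hx : x ∈ Submodule.span ℝ ({u, ρ u} : Set V) := by
          rw [hP]; exact Submodule.subset_span (Set.mem_insert _ _)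
        have := mem_spanC _ _ hx
        rwa [Set.image_pair] at this
      · have hy : y ∈ Submodule.span ℝ ({u, ρ u} : Set V) := by
          rw [hP]; exact Submodule.subset_span (Set.mem_insert_of_mem _ rfl)
        have := mem_spanC _ _ hy
        rwa [Set.image_pair] at this
    · apply Submodule.span_le.2
      rintro t (rfl | rfl)
      · have := mem_spanC _ _ hu_mem
        rw [Set.image_pair] at this
        rwa [hΛ]
      · have := mem_spanC _ _ hρu_mem
        rw [Set.image_pair] at this
        rwa [hΛ]
  -- invariance
  have hinv : ∀ t ∈ Λ, LinearMap.baseChange ℂ ρ t ∈ Λ := by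
    intro t ht
    rw [hΛ'] at ht ⊢
    have hmap : Submodule.map (LinearMap.baseChange ℂ ρ)
        (Submodule.span ℂ {(1:ℂ) ⊗ₜ[ℝ] u, (1:ℂ) ⊗ₜ[ℝ] (ρ u)})
        ≤ Submodule.span ℂ {(1:ℂ) ⊗ₜ[ℝ] u, (1:ℂ) ⊗ₜ[ℝ] (ρ u)} := by
      rw [Submodule.map_span]
      apply Submodule.span_le.2
      rintro s ⟨t', (rfl | rfl), rfl⟩
      · rw [LinearMap.baseChange_tmul]
        exact Submodule.subset_span (Set.mem_insert_of_mem _ rfl)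
      · rw [LinearMap.baseChange_tmul, hρ2, TensorProduct.tmul_neg]
        exact neg_mem (Submodule.subset_span (Set.mem_insert _ _))
    exact hmap ⟨t, ht, rfl⟩
  -- the distinguished vector
  set w0 : ℂ ⊗[ℝ] V := (1:ℂ) ⊗ₜ[ℝ] u - Complex.I • ((1:ℂ) ⊗ₜ[ℝ] (ρ u)) with hw0def
  have hw0Λ : w0 ∈ Λ := by
    rw [hΛ']
    refine Submodule.mem_span_pair.mpr ⟨1, -Complex.I, ?_⟩
    rw [one_smul, neg_smul, hw0def, sub_eq_add_neg]
  have hw0W : w0 ∈ W := by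
    rw [hW, Module.End.mem_eigenspace_iff, hw0def]
    simp only [map_sub, map_smul, LinearMap.baseChange_tmul, hρ2, TensorProduct.tmul_neg,
      smul_neg, smul_sub, smul_smul, Complex.I_mul_I, neg_one_smul, sub_neg_eq_add]
    abel
  have hw0ne : w0 ≠ 0 := by
    intro h
    have h' : (1:ℂ) • ((1:ℂ) ⊗ₜ[ℝ] u) + (-Complex.I) • ((1:ℂ) ⊗ₜ[ℝ] (ρ u)) = 0 := by
      rw [one_smul, neg_smul, ← sub_eq_add_neg]
      exact h
    exact one_ne_zero (indepC hpair_z 1 (-Complex.I) h').1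
  -- Λ ⊓ W = span {w0}
  have hiWeq : Λ ⊓ W = Submodule.span ℂ {w0} := by
    apply le_antisymm
    · rintro t ⟨htΛ, htW⟩
      rw [hΛ'] at htΛ
      obtain ⟨α, β, hαβ⟩ := Submodule.mem_span_pair.mp htΛ
      rw [hW] at htW
      have htWe : LinearMap.baseChange ℂ ρ t = Complex.I • t :=
        Module.End.mem_eigenspace_iff.mp htW
      rw [← hαβ] at htWe
      simp only [map_add, map_smul, LinearMap.baseChange_tmul, hρ2, TensorProduct.tmul_neg,
        smul_neg, smul_add, smul_smul] at htWe
      have h0 : (-β - Complex.I * α) • ((1:ℂ) ⊗ₜ[ℝ] u)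
          + (α - Complex.I * β) • ((1:ℂ) ⊗ₜ[ℝ] (ρ u)) = 0 := by
        rw [← sub_eq_zero] at htWe
        linear_combination (norm := module) htWe
      obtain ⟨c1, c2⟩ := indepC hpair_z _ _ h0
      have hβ : β = -(Complex.I * α) := by linear_combination -c1
      refine Submodule.mem_span_singleton.mpr ⟨α, ?_⟩
      rw [← hαβ, hβ, hw0def]
      module
    · rw [Submodule.span_le, Set.singleton_subset_iff]
      exact ⟨hw0Λ, hw0W⟩
  refine ⟨hinv, ?_, u, hu_mem, hune, hΛ', hiWeq⟩
  rw [hiWeq]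
  exact finrank_span_singleton hw0ne
end

section
/- Let V be a finite-dimensional real vector space, B a symmetric bilinear form on V, and ρ : V → V an isometry of B with ρ ∘ ρ = -id. If x ∈ V is nonzero with B(x,x) = 0, then x and ρ(x) are ℝ-linearly independent, the plane Λ = span_ℂ{x, ρ(x)} ⊆ V_ℂ is totally isotropic for B_ℂ and ρ_ℂ-invariant, and the vector x - i·ρ(x) lies in Λ ∩ W. -/
open TensorProduct

/-- Let `V` be a finite-dimensional real vector space, `B` a symmetric bilinear
form, `ρ : V → V` an isometry of `B` with `ρ ∘ ρ = -id`. If `x ∈ V` is nonzero with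
`B(x,x) = 0`, then `x` and `ρ(x)` are `ℝ`-linearly independent, the plane
`Λ = span_ℂ{x, ρ(x)}` in the complexification is totally isotropic for `B_ℂ` and
`ρ_ℂ`-invariant, and `x - i·ρ(x)` lies in `Λ ∩ W` where `W` is the `i`-eigenspace of `ρ_ℂ`. -/
theorem stmt6 (V : Type*) [AddCommGroup V] [Module ℝ V] [FiniteDimensional ℝ V]
    (B : LinearMap.BilinForm ℝ V) (hsymm : ∀ x y : V, B x y = B y x)
    (ρ : V →ₗ[ℝ] V) (hiso : ∀ x y : V, B (ρ x) (ρ y) = B x y)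
    (hρ : ρ ∘ₗ ρ = -LinearMap.id)
    (x : V) (hx : x ≠ 0) (hxx : B x x = 0)
    (Λ : Submodule ℂ (ℂ ⊗[ℝ] V))
    (hΛ : Λ = Submodule.span ℂ {(1 : ℂ) ⊗ₜ[ℝ] x, (1 : ℂ) ⊗ₜ[ℝ] (ρ x)}) :
    LinearIndependent ℝ ![x, ρ x] ∧
    (∀ v ∈ Λ, ∀ w ∈ Λ, (B.baseChange ℂ) v w = 0) ∧
    (∀ v ∈ Λ, LinearMap.baseChange ℂ ρ v ∈ Λ) ∧
    (1 : ℂ) ⊗ₜ[ℝ] x - Complex.I • ((1 : ℂ) ⊗ₜ[ℝ] (ρ x)) ∈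
      Λ ⊓ Module.End.eigenspace (LinearMap.baseChange ℂ ρ) Complex.I := by
  have hρ2 : ∀ v : V, ρ (ρ v) = -v := fun v => by
    have := congrFun (congrArg (DFunLike.coe) hρ) v
    simpa using this
  -- B(x, ρ x) = 0
  have hxρ : B x (ρ x) = 0 := by
    have h1 : B (ρ x) (ρ (ρ x)) = B x (ρ x) := hiso x (ρ x)
    rw [hρ2] at h1
    have h2 : B (ρ x) (-x) = -B (ρ x) x := by simp
    rw [h2, hsymm (ρ x) x] at h1
    linarith
  have hρx : B (ρ x) x = 0 := by rw [hsymm]; exact hxρ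
  have hρρ : B (ρ x) (ρ x) = 0 := by rw [hiso]; exact hxx
  refine ⟨?_, ?_, ?_, ?_⟩
  · -- linear independence
    rw [LinearIndependent.pair_iff]
    intro s t hst
    have h1 : s • ρ x + t • ρ (ρ x) = 0 := by
      have := congrArg ρ hst
      simpa using this
    rw [hρ2] at h1
    -- s • x + t • ρ x = 0 and s • ρ x - t • x = 0
    have h2 : (s * s + t * t) • x = 0 := by
      linear_combination (norm := module) s • hst - t • h1
    have hst0 : s * s + t * t = 0 := by
      rcases smul_eq_zero.mp h2 with h | h
      · exact h
      · exact absurd h hx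
    constructor <;> nlinarith [sq_nonneg s, sq_nonneg t]
  · -- totally isotropic
    subst hΛ
    intro v hv w hw
    have key : ∀ a b : V, B a b = 0 →
        ∀ w ∈ Submodule.span ℂ {(1 : ℂ) ⊗ₜ[ℝ] x, (1 : ℂ) ⊗ₜ[ℝ] (ρ x)}, True := fun _ _ _ _ _ => trivial
    -- first: for generators g, B_ℂ g w = 0 for all w ∈ span
    have gen : ∀ g ∈ ({(1 : ℂ) ⊗ₜ[ℝ] x, (1 : ℂ) ⊗ₜ[ℝ] (ρ x)} : Set (ℂ ⊗[ℝ] V)),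
        (B.baseChange ℂ) g w = 0 := by
      intro g hg
      induction hw using Submodule.span_induction with
      | mem w hw =>
        rcases hg with rfl | rfl <;> rcases hw with rfl | rfl <;>
          simp [hxx, hxρ, hρx, hρρ]
      | zero => simp
      | add a b _ _ ha hb => simp [ha, hb]
      | smul c a _ ha => simp [ha]
    induction hv using Submodule.span_induction with
    | mem v hv => exact gen v hv
    | zero => simp
    | add a b _ _ ha hb => simp [ha, hb]
    | smul c a _ ha => simp [ha]
  · -- invariance
    subst hΛ
    intro v hv
    induction hv using Submodule.span_induction with
    | mem v hv =>
      rcases hv with rfl | rfl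
      · simp only [LinearMap.baseChange_tmul]
        exact Submodule.subset_span (Or.inr rfl)
      · simp only [LinearMap.baseChange_tmul, hρ2]
        rw [TensorProduct.tmul_neg]
        exact Submodule.neg_mem _ (Submodule.subset_span (Or.inl rfl))
    | zero => simp
    | add a b _ _ ha hb => simpa using Submodule.add_mem _ ha hb
    | smul c a _ ha => simpa using Submodule.smul_mem _ c ha
  · refine Submodule.mem_inf.mpr ⟨?_, ?_⟩
    · subst hΛ
      exact Submodule.sub_mem _ (Submodule.subset_span (Or.inl rfl))
        (Submodule.smul_mem _ _ (Submodule.subset_span (Or.inr rfl)))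
    · rw [Module.End.mem_eigenspace_iff]
      simp only [map_sub, LinearMap.map_smul, LinearMap.baseChange_tmul, hρ2]
      rw [TensorProduct.tmul_neg]
      rw [smul_sub, smul_smul, Complex.I_mul_I]
      module
end

section
/- Let J₂ be the 2×2 integer matrix [[0,1],[-1,0]]. If M is a 2×2 integer matrix with Mᵀ·M = I and M·M = -I (i.e. M is an isometry of the lattice A₁ ⊕ A₁ whose square is minus the identity), then there exists a 2×2 integer matrix P with Pᵀ·P = I such that P⁻¹·M·P = J₂. In particular, the lattice A₁ ⊕ A₁ has a unique structure of ℤ[i]-module up to isometries. -/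
/-!
An orthogonal `M` with `M * M = -1` satisfies `Mᵀ = M⁻¹ = -M`, so it is skew-symmetric:
`M = !![0, b; -b, 0]`, and orthogonality forces `b * b = 1`. Conjugating by the orthogonal
matrix `!![1, 0; 0, b]` multiplies the off-diagonal entries by `b`, which gives `J₂`.
-/

open Matrix

theorem Matrix.transpose_eq_neg_of_mul_self_eq_neg_one {n R : Type*} [Fintype n] [DecidableEq n]
    [Ring R] {M : Matrix n n R} (horth : Mᵀ * M = 1) (hsq : M * M = -1) : Mᵀ = -M :=
  calc Mᵀ = -(Mᵀ * (M * M)) := by rw [hsq, mul_neg, mul_one, neg_neg]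
    _ = -M := by rw [← Matrix.mul_assoc, horth, Matrix.one_mul]

theorem Matrix.eq_fin_two_of_transpose_eq_neg {R : Type*} [AddCommGroup R] [IsAddTorsionFree R]
    {A : Matrix (Fin 2) (Fin 2) R} (h : Aᵀ = -A) : A = !![0, A 0 1; -A 0 1, 0] := by
  have hji (i j : Fin 2) : A j i = -A i j := congrFun (congrFun h i) j
  rw [eta_fin_two A]
  simp [self_eq_neg.mp (hji 0 0), self_eq_neg.mp (hji 1 1), hji 0 1]

section DiagOneUnit

variable {R : Type*} [CommRing R] {b : R}

theorem Matrix.transpose_mul_self_diag_one_eq_one (hb : b * b = 1) :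
    (!![1, 0; 0, b] : Matrix (Fin 2) (Fin 2) R)ᵀ * !![1, 0; 0, b] = 1 := by
  ext i j; fin_cases i <;> fin_cases j <;> simp [mul_apply, hb]

theorem Matrix.diag_one_conj_skew_eq (hb : b * b = 1) :
    (!![1, 0; 0, b] : Matrix (Fin 2) (Fin 2) R)ᵀ * !![0, b; -b, 0] * !![1, 0; 0, b] =
      !![0, 1; -1, 0] := by
  ext i j; fin_cases i <;> fin_cases j <;> simp [mul_apply, hb]

end DiagOneUnit

/-- Let `J₂ = [[0,1],[-1,0]]`. If `M` is a `2×2` integer matrix with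
`Mᵀ·M = I` and `M·M = -I` (an isometry of the lattice `A₁ ⊕ A₁` squaring to minus the
identity), then there is a `2×2` integer matrix `P` with `Pᵀ·P = I` and `P⁻¹·M·P = J₂`.
In particular, `A₁ ⊕ A₁` has a unique structure of `ℤ[i]`-module up to isometries. -/
theorem stmt8 (M : Matrix (Fin 2) (Fin 2) ℤ)
    (horth : Mᵀ * M = 1) (hsq : M * M = -1) :
    ∃ P : Matrix (Fin 2) (Fin 2) ℤ,
      Pᵀ * P = 1 ∧ P⁻¹ * M * P = !![0, 1; -1, 0] := by
  have hM := eq_fin_two_of_transpose_eq_neg (transpose_eq_neg_of_mul_self_eq_neg_one horth hsq)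
  set b := M 0 1
  have hb : b * b = 1 := by
    rw [hM] at horth
    simpa [mul_apply] using congrFun (congrFun horth 0) 0
  have hP := transpose_mul_self_diag_one_eq_one hb
  refine ⟨_, hP, ?_⟩
  rw [inv_eq_left_inv hP, hM, diag_one_conj_skew_eq hb]
end

section
/- Let ρ₁ and ρ₂ be isometries of the lattice D₄ satisfying ρ₁ ∘ ρ₁ = -id and ρ₂ ∘ ρ₂ = -id. Then there exists an isometry g of D₄ with g ∘ ρ₁ = ρ₂ ∘ g. In particular, D₄ has a unique structure of ℤ[i]-module up to isometries. -/
open Matrix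

/-- The lattice `D₄ = {x ∈ ℤ⁴ : x₁ + x₂ + x₃ + x₄ is even}` as a `ℤ`-submodule of `ℤ⁴`. -/
def D4 : Submodule ℤ (Fin 4 → ℤ) where
  carrier := {x | (2 : ℤ) ∣ (x 0 + x 1 + x 2 + x 3)}
  add_mem' {a b} ha hb := by
    simp only [Set.mem_setOf_eq, Pi.add_apply] at *
    omega
  zero_mem' := by
    simp only [Set.mem_setOf_eq, Pi.zero_apply, add_zero]
    exact dvd_zero 2
  smul_mem' c x hx := by
    simp only [Set.mem_setOf_eq, Pi.smul_apply, smul_eq_mul] at *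
    obtain ⟨k, hk⟩ := hx
    exact ⟨c * k, by linear_combination c * hk⟩

theorem mem_D4_iff (x : Fin 4 → ℤ) : x ∈ D4 ↔ (2 : ℤ) ∣ (x 0 + x 1 + x 2 + x 3) :=
  Iff.rfl

/-- An isometry of the lattice `D₄`: a `ℤ`-linear automorphism of `D₄` preserving the
restriction of the standard Euclidean inner product of `ℤ⁴`. -/
def IsD4Isometry (g : D4 ≃ₗ[ℤ] D4) : Prop :=
  ∀ x y : D4, ((g x : Fin 4 → ℤ) ⬝ᵥ (g y : Fin 4 → ℤ)) = ((x : Fin 4 → ℤ) ⬝ᵥ (y : Fin 4 → ℤ))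

/-!
If `ρ` is an isometry of `D₄` with `ρ² = -1`, then `⟨ρx, y⟩ = -⟨x, ρy⟩`, so `x ⟂ ρx`. Starting
from the root `r = (1,1,0,0)`, the root `ρr` is orthogonal to `r`, and a short case analysis on
`ρr` gives a root `t` with `⟨r, t⟩ = 1` and `⟨t, ρr⟩ = -1`. The family `(r, ρr, t, ρt)` then has
the Gram matrix of a fixed basis `(r, ρ₀r, t₀, ρ₀t₀)` of `D₄`, adapted to a standard structure
`ρ₀`. The linear map sending this basis to `(r, ρr, t, ρt)` preserves the form; since the Gram
determinant is nonzero, its determinant squares to `1`, so it is an automorphism conjugating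
`ρ₀` to `ρ`. Any two structures are therefore conjugate through `ρ₀`.
-/

section GramMatrix

variable {R M ι : Type*} [CommRing R] [IsDomain R] [AddCommGroup M] [Module R M]
  [Fintype ι] [DecidableEq ι]

theorem LinearMap.BilinForm.isUnit_det_toMatrix_of_compl₁₂_self (b : Module.Basis ι R M)
    {B : LinearMap.BilinForm R M} (hB : (toMatrix₂ b b B).det ≠ 0) {f : M →ₗ[R] M}
    (hf : B.compl₁₂ f f = B) : IsUnit (LinearMap.toMatrix b b f).det := by
  have hdet := congrArg (fun B' => (toMatrix₂ b b B').det) hf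
  simp only [toMatrix₂_compl₁₂ b b, Matrix.det_mul, Matrix.det_transpose] at hdet
  refine .of_mul_eq_one (LinearMap.toMatrix b b f).det (mul_right_cancel₀ hB ?_)
  linear_combination hdet

theorem LinearMap.BilinForm.exists_linearEquiv_of_gram_eq (b : Module.Basis ι R M)
    {B : LinearMap.BilinForm R M} (hB : (toMatrix₂ b b B).det ≠ 0) (v : ι → M)
    (hv : ∀ i j, B (v i) (v j) = B (b i) (b j)) :
    ∃ e : M ≃ₗ[R] M, (∀ x y, B (e x) (e y) = B x y) ∧ ∀ i, e (b i) = v i := by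
  have hf : B.compl₁₂ (b.constr R v) (b.constr R v) = B :=
    b.ext fun i => b.ext fun j => by simpa using hv i j
  refine ⟨.ofIsUnitDet (isUnit_det_toMatrix_of_compl₁₂_self b hB hf), fun x y => ?_,
    fun i => by simp⟩
  simpa using LinearMap.congr_fun₂ hf x y

end GramMatrix

namespace D4

def dotForm : LinearMap.BilinForm ℤ D4 :=
  (dotProductBilin ℤ ℤ).compl₁₂ D4.subtype D4.subtype

theorem dotForm_apply (x y : D4) : dotForm x y = (x : Fin 4 → ℤ) ⬝ᵥ (y : Fin 4 → ℤ) := rfl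

theorem dotForm_comm (x y : D4) : dotForm x y = dotForm y x := dotProduct_comm (x : Fin 4 → ℤ) y

-- The rows are `r, ρ₀ r, t₀, ρ₀ t₀` for `r = (1,1,0,0)`, `t₀ = (1,0,1,0)` and the standard
-- structure `ρ₀ (x₀, x₁, x₂, x₃) = (-x₁, x₀, -x₃, x₂)`.
def basisRows : Matrix (Fin 4) (Fin 4) ℤ := !![1, 1, 0, 0; -1, 1, 0, 0; 1, 0, 1, 0; 0, 1, 0, 1]

theorem vecMul_basisRows_mem (c : Fin 4 → ℤ) : c ᵥ* basisRows ∈ D4 := by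
  rw [vecMul_eq_sum]
  refine Submodule.sum_mem _ fun i _ => Submodule.smul_mem _ _ ?_
  fin_cases i <;> exact (mem_D4_iff _).2 (by decide)

def coordEquiv : (Fin 4 → ℤ) ≃ₗ[ℤ] D4 where
  toFun c := ⟨c ᵥ* basisRows, vecMul_basisRows_mem c⟩
  map_add' c d := Subtype.ext (add_vecMul _ c d)
  map_smul' a c := Subtype.ext (smul_vecMul a c _)
  -- the divisions by 2 are exact on `D₄`, by its parity condition
  invFun x := ![(x.1 0 + x.1 1 - x.1 2 - x.1 3) / 2, (x.1 1 - x.1 0 + x.1 2 - x.1 3) / 2,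
    x.1 2, x.1 3]
  left_inv c := funext fun i => by
    fin_cases i <;>
      simp only [vecMul, dotProduct, Fin.sum_univ_four, basisRows, of_apply, Fin.zero_eta,
        Fin.mk_one, Fin.reduceFinMk, Fin.isValue, cons_val', cons_val, cons_val_zero, cons_val_one,
        cons_val_fin_one] <;> omega
  right_inv x := by
    have hx := (mem_D4_iff x.1).1 x.2
    ext i
    fin_cases i <;>
      simp only [vecMul, dotProduct, Fin.sum_univ_four, basisRows, of_apply, Fin.zero_eta,
        Fin.mk_one, Fin.reduceFinMk, Fin.isValue, cons_val', cons_val, cons_val_zero, cons_val_one,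
        cons_val_fin_one] <;> omega

noncomputable def stdBasis : Module.Basis (Fin 4) ℤ D4 := .ofEquivFun coordEquiv.symm

theorem coe_stdBasis (i : Fin 4) : (stdBasis i : Fin 4 → ℤ) = basisRows i := by
  simp [stdBasis, coordEquiv, Matrix.row]

noncomputable def stdRho : D4 →ₗ[ℤ] D4 :=
  stdBasis.constr ℤ ![stdBasis 1, -stdBasis 0, stdBasis 3, -stdBasis 2]

def stdGram : Matrix (Fin 4) (Fin 4) ℤ := !![2, 0, 1, 1; 0, 2, -1, 1; 1, -1, 2, 0; 1, 1, 0, 2]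

theorem toMatrix₂_stdBasis : LinearMap.toMatrix₂ stdBasis stdBasis dotForm = stdGram := by
  ext i j
  rw [LinearMap.toMatrix₂_apply, dotForm_apply, coe_stdBasis, coe_stdBasis]
  fin_cases i <;> fin_cases j <;> decide

theorem det_stdGram : stdGram.det = 4 := by
  decide

theorem exists_root_dotProduct_eq (u : Fin 4 → ℤ) (hu : u ⬝ᵥ u = 2)
    (hru : ![1, 1, 0, 0] ⬝ᵥ u = 0) :
    ∃ t ∈ D4, t ⬝ᵥ t = 2 ∧ ![1, 1, 0, 0] ⬝ᵥ t = 1 ∧ t ⬝ᵥ u = -1 := by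
  simp only [dotProduct, Fin.sum_univ_four, mem_D4_iff, cons_val_zero, cons_val_one, cons_val]
    at hu hru ⊢
  have hu1 : u 1 = -u 0 := by linarith
  have hnorm : 2 * u 0 ^ 2 + u 2 ^ 2 + u 3 ^ 2 = 2 := by rw [hu1] at hu; linarith
  have h2 : -1 ≤ u 2 ∧ u 2 ≤ 1 := by constructor <;> nlinarith
  have h3 : -1 ≤ u 3 ∧ u 3 ≤ 1 := by constructor <;> nlinarith
  by_cases hu0 : u 0 = 0
  · have hu2 : u 2 ^ 2 = 1 := by nlinarith
    refine ⟨![1, 0, -u 2, 0], ?_⟩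
    rcases sq_eq_one_iff.mp hu2 with h | h <;> simp [h, hu0, hu1]
  · have hu0' : u 0 ^ 2 = 1 := by
      have : 0 < u 0 ^ 2 := by positivity
      nlinarith
    have hu2 : u 2 = 0 := by nlinarith
    have hu3 : u 3 = 0 := by nlinarith
    rcases sq_eq_one_iff.mp hu0' with h | h
    · exact ⟨![0, 1, 1, 0], by simp [h, hu1, hu2, hu3]⟩
    · exact ⟨![1, 0, 1, 0], by simp [h, hu2, hu3]⟩

end D4

open D4

namespace IsD4Isometry

variable {g h ρ : D4 ≃ₗ[ℤ] D4}

theorem symm (hg : IsD4Isometry g) : IsD4Isometry g.symm := fun x y => by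
  simpa using (hg (g.symm x) (g.symm y)).symm

theorem trans (hg : IsD4Isometry g) (hh : IsD4Isometry h) : IsD4Isometry (g.trans h) :=
  fun x y => (hh (g x) (g y)).trans (hg x y)

theorem dotForm_map_map (hρ : IsD4Isometry ρ) (x y : D4) :
    dotForm (ρ x) (ρ y) = dotForm x y := hρ x y

theorem dotForm_map_left (hρ : IsD4Isometry ρ) (hsq : ∀ x, ρ (ρ x) = -x) (x y : D4) :
    dotForm (ρ x) y = -dotForm x (ρ y) := by
  rw [← hρ.dotForm_map_map, hsq, map_neg, LinearMap.neg_apply]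

theorem dotForm_self_map (hρ : IsD4Isometry ρ) (hsq : ∀ x, ρ (ρ x) = -x) (x : D4) :
    dotForm x (ρ x) = 0 := by
  have := hρ.dotForm_map_left hsq x x
  rw [dotForm_comm] at this
  omega

theorem dotForm_frame (hρ : IsD4Isometry ρ) (hsq : ∀ x, ρ (ρ x) = -x) {r t : D4}
    (hr : dotForm r r = 2) (ht : dotForm t t = 2) (hrt : dotForm r t = 1)
    (htr : dotForm t (ρ r) = -1) (i j : Fin 4) :
    dotForm (![r, ρ r, t, ρ t] i) (![r, ρ r, t, ρ t] j) = stdGram i j := by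
  have hrt' : dotForm r (ρ t) = 1 := by
    rw [← neg_neg (dotForm r _), ← hρ.dotForm_map_left hsq, dotForm_comm, htr, neg_neg]
  have htr' : dotForm t r = 1 := dotForm_comm t r ▸ hrt
  fin_cases i <;> fin_cases j <;>
    simp [stdGram, hρ.dotForm_map_map, hρ.dotForm_self_map hsq, hρ.dotForm_map_left hsq,
      hr, ht, hrt, hrt', htr, htr']

end IsD4Isometry

theorem D4.exists_isometry_comp_stdRho {ρ : D4 ≃ₗ[ℤ] D4} (hρ : IsD4Isometry ρ)
    (hsq : ∀ x, ρ (ρ x) = -x) :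
    ∃ h : D4 ≃ₗ[ℤ] D4, IsD4Isometry h ∧ ∀ x, h (stdRho x) = ρ (h x) := by
  set r := stdBasis 0
  have hr : (r : Fin 4 → ℤ) = ![1, 1, 0, 0] := coe_stdBasis 0
  have hrr : dotForm r r = 2 := by rw [dotForm_apply, hr]; decide
  obtain ⟨t, htD4, htt, hrt, htr⟩ := exists_root_dotProduct_eq (ρ r)
    (by rw [← dotForm_apply, hρ.dotForm_map_map, hrr])
    (by rw [← hr, ← dotForm_apply, hρ.dotForm_self_map hsq])
  obtain ⟨h, hh, hb⟩ := LinearMap.BilinForm.exists_linearEquiv_of_gram_eq stdBasis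
    (by rw [toMatrix₂_stdBasis, det_stdGram]; norm_num) ![r, ρ r, ⟨t, htD4⟩, ρ ⟨t, htD4⟩]
    fun i j => by
      rw [← LinearMap.toMatrix₂_apply stdBasis stdBasis, toMatrix₂_stdBasis]
      exact hρ.dotForm_frame hsq hrr htt (by rwa [dotForm_apply, hr]) htr i j
  have hconj : h.toLinearMap ∘ₗ stdRho = ρ.toLinearMap ∘ₗ h.toLinearMap :=
    stdBasis.ext fun i => by fin_cases i <;> simp [stdRho, hb, hsq]
  exact ⟨h, hh, LinearMap.congr_fun hconj⟩

/-- Let `ρ₁` and `ρ₂` be isometries of the lattice `D₄` with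
`ρ₁ ∘ ρ₁ = -id` and `ρ₂ ∘ ρ₂ = -id`. Then there is an isometry `g` of `D₄` with
`g ∘ ρ₁ = ρ₂ ∘ g`. In particular, `D₄` has a unique structure of `ℤ[i]`-module up to
isometries. -/
theorem stmt9 (ρ₁ ρ₂ : D4 ≃ₗ[ℤ] D4)
    (h₁iso : IsD4Isometry ρ₁) (h₂iso : IsD4Isometry ρ₂)
    (h₁ : ∀ x : D4, ρ₁ (ρ₁ x) = -x) (h₂ : ∀ x : D4, ρ₂ (ρ₂ x) = -x) :
    ∃ g : D4 ≃ₗ[ℤ] D4, IsD4Isometry g ∧ ∀ x : D4, g (ρ₁ x) = ρ₂ (g x) := by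
  obtain ⟨e₁, he₁, hc₁⟩ := D4.exists_isometry_comp_stdRho h₁iso h₁
  obtain ⟨e₂, he₂, hc₂⟩ := D4.exists_isometry_comp_stdRho h₂iso h₂
  refine ⟨e₁.symm.trans e₂, he₁.symm.trans he₂, fun x => ?_⟩
  obtain ⟨y, rfl⟩ := e₁.surjective x
  simp [← hc₁, hc₂]
end

section
/- Let α ∈ ℂ, let a_{ij} ∈ ℂ be given for indices with i + 2j ≥ 5 and i + j ≤ 4, and let Ψ(x, y, z, s) be a polynomial that is homogeneous of degree 4 in x, y, z. For s ∈ ℂ define f_s(x, y, z) = (yz + α·x²)² + Σ_{i+2j ≥ 5} a_{ij} x^i y^j z^{4-i-j} + s·Ψ(x, y, z, s). Then the expression g(t, x, y, z) = f_{t⁵}(x, t·y, t⁻¹·z), a priori a Laurent polynomial in t, is a genuine polynomial in ℂ[x, y, z, t], and g(0, x, y, z) = (yz + α·x²)². (Hence every such one-parameter family of semistable plane quartics degenerating to an inadmissible quartic is equivalent to one degenerating to the double conic (yz + α·x²)² = 0.) -/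
/-!
Under `(x, y, z, s) ↦ (x, t y, t⁻¹ z, t⁵)` a monomial `x^i y^j z^k s^l` picks up the factor
`t^(j - k + 5 l)`. For the monomials of `Σ a_{ij} x^i y^j z^{4-i-j}` this exponent is
`i + 2j - 4 > 0`, and for those of `s Ψ` it is `5 + j - k + 5 l ≥ 1` because `k ≤ 4`.
So all these terms become honest monomials in `t` that vanish at `t = 0`, while
`(yz + αx²)²` is invariant.
-/

open MvPolynomial Finset

namespace MvPolynomial

variable {K : Type*} [Field K]

lemma eval_monomial_fin_four (v : Fin 4 → K) (m : Fin 4 →₀ ℕ) (c : K) :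
    eval v (monomial m c) = c * (v 0 ^ m 0 * v 1 ^ m 1 * v 2 ^ m 2 * v 3 ^ m 3) := by
  rw [eval_monomial, Finsupp.prod_fintype _ _ (fun _ => pow_zero _), Fin.prod_univ_four]

/-- The exponent of `t ^ n · x^m₀ (t y)^m₁ (t⁻¹ z)^m₂ (t^d)^m₃` as a monomial in `x, y, z, t`,
with the power of `t` truncated at `0`. -/
noncomputable def rescaleExp (n d : ℕ) (m : Fin 4 →₀ ℕ) : Fin 4 →₀ ℕ :=
  m.update 3 (n + m 1 + d * m 3 - m 2)

/-- `t ^ n · P(x, t y, t⁻¹ z, t ^ d)` as a polynomial in `x, y, z, t`, valid when no monomial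
of `P` has a negative total power of `t`. -/
noncomputable def rescale (n d : ℕ) (P : MvPolynomial (Fin 4) K) : MvPolynomial (Fin 4) K :=
  ∑ m ∈ P.support, monomial (rescaleExp n d m) (P.coeff m)

lemma eval_monomial_rescaleExp {n d : ℕ} {m : Fin 4 →₀ ℕ} (hm : m 2 ≤ n + m 1 + d * m 3)
    (c : K) {t : K} (ht : t ≠ 0) (x y z : K) :
    eval ![x, y, z, t] (monomial (rescaleExp n d m) c) =
      t ^ n * eval ![x, t * y, t⁻¹ * z, t ^ d] (monomial m c) := by
  simp only [eval_monomial_fin_four, rescaleExp, Finsupp.update_apply]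
  simp only [Fin.isValue, Fin.reduceEq, if_false, if_true, Matrix.cons_val_zero,
    Matrix.cons_val_one, Matrix.cons_val_two, Matrix.cons_val_three, Matrix.head_cons,
    Matrix.tail_cons]
  rw [pow_sub₀ t ht hm, mul_pow, mul_pow, inv_pow, pow_add, pow_add, ← pow_mul]
  field_simp

lemma eval_rescale {n d : ℕ} {P : MvPolynomial (Fin 4) K}
    (hP : ∀ m ∈ P.support, m 2 ≤ n + m 1 + d * m 3) {t : K} (ht : t ≠ 0) (x y z : K) :
    eval ![x, y, z, t] (rescale n d P) = t ^ n * eval ![x, t * y, t⁻¹ * z, t ^ d] P := by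
  conv_rhs => rw [P.as_sum]
  simp only [rescale, map_sum, mul_sum]
  exact sum_congr rfl fun m hm => eval_monomial_rescaleExp (hP m hm) _ ht x y z

lemma eval_rescale_at_zero {n d : ℕ} {P : MvPolynomial (Fin 4) K}
    (hP : ∀ m ∈ P.support, m 2 < n + m 1 + d * m 3) (x y z : K) :
    eval ![x, y, z, 0] (rescale n d P) = 0 := by
  refine (map_sum _ _ _).trans (sum_eq_zero fun m hm => ?_)
  simp only [eval_monomial_fin_four, rescaleExp, Finsupp.update_apply]
  simp only [Fin.isValue, if_true, Matrix.cons_val_three, Matrix.head_cons, Matrix.tail_cons]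
  rw [zero_pow (by have := hP m hm; omega), mul_zero, mul_zero]

end MvPolynomial

section InadmissibleQuartic

variable {K : Type*} [Field K]

def tailIndices : Finset (ℕ × ℕ) :=
  (range 5 ×ˢ range 5).filter (fun p => 5 ≤ p.1 + 2 * p.2 ∧ p.1 + p.2 ≤ 4)

noncomputable def quarticTail (a : ℕ → ℕ → K) : MvPolynomial (Fin 4) K :=
  ∑ p ∈ tailIndices,
    monomial (.single 0 p.1 + .single 1 p.2 + .single 2 (4 - p.1 - p.2)) (a p.1 p.2)

lemma eval_quarticTail (a : ℕ → ℕ → K) (v : Fin 4 → K) :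
    eval v (quarticTail a) =
      ∑ p ∈ tailIndices, a p.1 p.2 * v 0 ^ p.1 * v 1 ^ p.2 * v 2 ^ (4 - p.1 - p.2) := by
  simp only [quarticTail, map_sum, eval_monomial_fin_four, Finsupp.add_apply,
    Finsupp.single_apply]
  refine sum_congr rfl fun p _ => ?_
  simp only [Fin.isValue, Fin.reduceEq, if_false, if_true]
  ring

lemma lt_of_mem_support_quarticTail {a : ℕ → ℕ → K} {m : Fin 4 →₀ ℕ}
    (hm : m ∈ (quarticTail a).support) : m 2 < m 1 := by
  obtain ⟨p, hp, hmp⟩ := mem_biUnion.mp (support_sum hm)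
  rw [Finset.mem_singleton.mp (support_monomial_subset hmp)]
  simp only [tailIndices, mem_filter, mem_product, mem_range] at hp
  simp only [Finsupp.add_apply, Finsupp.single_apply, Fin.isValue, Fin.reduceEq, if_false,
    if_true]
  omega

end InadmissibleQuartic

/-- Let `α ∈ ℂ`, let `a_{ij} ∈ ℂ` be given for indices with
`i + 2j ≥ 5` and `i + j ≤ 4`, and let `Ψ(x, y, z, s)` be a polynomial homogeneous of degree
`4` in `x, y, z` (the variables `X 0, X 1, X 2`; `s` is `X 3`).  For `s ∈ ℂ` let
`f_s(x, y, z) = (yz + α·x²)² + Σ_{i+2j ≥ 5} a_{ij} x^i y^j z^{4-i-j} + s·Ψ(x, y, z, s)`.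
Then `g(t, x, y, z) = f_{t⁵}(x, t·y, t⁻¹·z)`, a priori a Laurent polynomial in `t`, is a
genuine polynomial `G ∈ ℂ[x, y, z, t]`, and `g(0, x, y, z) = (yz + α·x²)²`.  (Hence every
such one-parameter family of semistable plane quartics degenerating to an inadmissible
quartic is equivalent to one degenerating to the double conic `(yz + α·x²)² = 0`.) -/
theorem stmt18 (α : ℂ) (a : ℕ → ℕ → ℂ) (Ψ : MvPolynomial (Fin 4) ℂ)
    (hΨ : ∀ m ∈ Ψ.support, m 0 + m 1 + m 2 = 4) :
    ∃ G : MvPolynomial (Fin 4) ℂ,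
      (∀ t x y z : ℂ, t ≠ 0 →
        MvPolynomial.eval ![x, y, z, t] G =
          (t * y * (t⁻¹ * z) + α * x ^ 2) ^ 2 +
          ∑ p ∈ (Finset.range 5 ×ˢ Finset.range 5).filter
              (fun p => 5 ≤ p.1 + 2 * p.2 ∧ p.1 + p.2 ≤ 4),
            a p.1 p.2 * x ^ p.1 * (t * y) ^ p.2 * (t⁻¹ * z) ^ (4 - p.1 - p.2) +
          t ^ 5 * MvPolynomial.eval ![x, t * y, t⁻¹ * z, t ^ 5] Ψ) ∧
      (∀ x y z : ℂ,
        MvPolynomial.eval ![x, y, z, 0] G = (y * z + α * x ^ 2) ^ 2) := by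
  have hTail : ∀ m ∈ (quarticTail a).support, m 2 < 0 + m 1 + 5 * m 3 := fun m hm => by
    have := lt_of_mem_support_quarticTail hm; omega
  have hΨ' : ∀ m ∈ Ψ.support, m 2 < 5 + m 1 + 5 * m 3 := fun m hm => by
    have := hΨ m hm; omega
  refine ⟨(X 1 * X 2 + C α * X 0 ^ 2) ^ 2 + rescale 0 5 (quarticTail a) + rescale 5 5 Ψ,
    fun t x y z ht => ?_, fun x y z => ?_⟩
  · rw [map_add, map_add, eval_rescale (fun m hm => (hTail m hm).le) ht,
      eval_rescale (fun m hm => (hΨ' m hm).le) ht, eval_quarticTail,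
      show t * y * (t⁻¹ * z) = y * z by field_simp]
    simp [tailIndices]
  · simp [eval_rescale_at_zero hTail, eval_rescale_at_zero hΨ']
end
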